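/- arXiv:0910.3926 — 2 statements merged into one kernel-verified Lean document; each statement's English description precedes it below -/
import Mathlib

section
/- Let x be chosen randomly from [k]^n according to the equal-slices measure, and let m be a positive integer. Then the probability that fewer than m coordinates of x are equal to k is at most mk/n. -/
open Finset

/-- The equal-slices probability of a single string `x ∈ [k]^n`: one first chooses
uniformly a `k`-tuple of nonnegative integers summing to `n` (there are
`(n+k-1).choose (k-1)` of them), then a uniformly random string with those
coordinate counts (there are `multinomial` many in the slice of `x`). -/
noncomputable def slicePr (k n : ℕ) (x : Fin n → Fin k) : ℝ :=
  (((n + k - 1).choose (k - 1) : ℝ))⁻¹ *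
    ((Nat.multinomial Finset.univ
      (fun j : Fin k => (Finset.univ.filter fun i => x i = j).card) : ℝ))⁻¹

/-- The equal-slices measure of a set `A ⊆ [k]^n`. -/
noncomputable def esDensity {k n : ℕ} (A : Finset (Fin n → Fin k)) : ℝ :=
  ∑ x ∈ A, slicePr k n x

/-!
Strings in the same slice as `x` are exactly the `x ∘ σ` with `σ` a permutation of the coordinates,
and the permutations fixing `x` permute each fibre of `x`; so the slice with counts `c` has
`multinomial c` strings and carries total mass `1 / C(n+k-1, k-1)`. Hence the density of a set is at
most the number of slices it meets over `C(n+k-1, k-1) = multichoose k n`. The slices with exactly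
`a < n` top coordinates are the compositions of `n - a` into `k - 1` parts, and there are at most
`multichoose (k-1) n = (k-1)/(k-1+n) · multichoose k n` of them; summing over `a < m` gives `mk/n`.
-/

section Slices

open Equiv
open scoped Nat

variable {α ι : Type*} [Fintype α] [DecidableEq ι]

def fiberCard (x : α → ι) (j : ι) : ℕ := #{a | x a = j}

lemma sum_fiberCard [Fintype ι] (x : α → ι) : ∑ j, fiberCard x j = Fintype.card α :=
  (card_eq_sum_card_fiberwise fun a _ => mem_univ (x a)).symm

lemma fiberCard_comp_perm (x : α → ι) (σ : Perm α) : fiberCard (x ∘ σ) = fiberCard x := by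
  ext j
  exact card_equiv σ (by simp)

lemma exists_perm_comp_eq_of_fiberCard_eq {x y : α → ι} (h : fiberCard y = fiberCard x) :
    ∃ σ : Perm α, x ∘ σ = y := by
  refine ⟨ofFiberEquiv fun j => Fintype.equivOfCardEq ?_, funext (ofFiberEquiv_map _)⟩
  rw [Fintype.card_subtype, Fintype.card_subtype]
  exact congrFun h j

variable [DecidableEq α]

lemma card_filter_comp_perm_eq [Fintype ι] (x : α → ι) (τ : Perm α) :
    #{σ : Perm α | x ∘ σ = x ∘ τ} = ∏ j, (fiberCard x j)! := by
  have hshift (σ : Perm α) : x ∘ σ = x ∘ τ ↔ x ∘ ⇑(σ * τ⁻¹) = x := by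
    refine ⟨fun h => funext fun a => ?_, fun h => funext fun a => ?_⟩
    · simpa using congrFun h (τ⁻¹ a)
    · simpa using congrFun h (τ a)
  rw [← Fintype.card_subtype, Fintype.card_congr ((Equiv.mulRight τ⁻¹).subtypeEquiv
    (p := fun σ : Perm α => x ∘ σ = x ∘ τ) (q := fun g : Perm α => x ∘ g = x) hshift),
    DomMulAct.stabilizer_card]
  simp only [Fintype.card_subtype, fiberCard]

lemma card_filter_fiberCard_eq_mul_prod_factorial [Fintype ι] (x : α → ι) :
    #{y : α → ι | fiberCard y = fiberCard x} * ∏ j, (fiberCard x j)! = (Fintype.card α)! := by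
  have hmaps : Set.MapsTo (fun σ : Perm α => x ∘ σ) (univ : Finset (Perm α))
      ({y | fiberCard y = fiberCard x} : Finset (α → ι)) :=
    fun σ _ => by simp [fiberCard_comp_perm]
  rw [← Fintype.card_perm, ← Finset.card_univ, card_eq_sum_card_fiberwise hmaps, ← smul_eq_mul,
    ← sum_const]
  refine sum_congr rfl fun y hy => ?_
  obtain ⟨τ, rfl⟩ := exists_perm_comp_eq_of_fiberCard_eq (mem_filter.mp hy).2
  exact (card_filter_comp_perm_eq x τ).symm

lemma card_filter_fiberCard_eq_multinomial [Fintype ι] (x : α → ι) :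
    #{y : α → ι | fiberCard y = fiberCard x} = Nat.multinomial univ (fiberCard x) := by
  have := Nat.multinomial_spec univ (fiberCard x)
  rw [sum_fiberCard, ← card_filter_fiberCard_eq_mul_prod_factorial x, mul_comm] at this
  exact Nat.eq_of_mul_eq_mul_right (prod_pos fun j _ => Nat.factorial_pos _) this.symm

end Slices

lemma esDensity_le_card_image_fiberCard {k n : ℕ} (A : Finset (Fin n → Fin k)) :
    esDensity A ≤ #(A.image fiberCard) / ((n + k - 1).choose (k - 1) : ℝ) := by
  set C : ℝ := (((n + k - 1).choose (k - 1) : ℕ) : ℝ)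
  have hslice (c : Fin k → ℕ) (hc : c ∈ A.image fiberCard) :
      #{x ∈ A | fiberCard x = c} • (C⁻¹ * (Nat.multinomial univ c : ℝ)⁻¹) ≤ C⁻¹ := by
    obtain ⟨x₀, -, rfl⟩ := mem_image.mp hc
    have hcard : #{x ∈ A | fiberCard x = fiberCard x₀} ≤ Nat.multinomial univ (fiberCard x₀) :=
      card_filter_fiberCard_eq_multinomial x₀ ▸
        card_le_card (filter_subset_filter _ (subset_univ A))
    have hM : (0 : ℝ) < Nat.multinomial univ (fiberCard x₀) := mod_cast Nat.multinomial_pos _ _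
    rw [nsmul_eq_mul, mul_left_comm, ← div_eq_mul_inv _ (Nat.multinomial univ _ : ℝ)]
    exact mul_le_of_le_one_right (by positivity) ((div_le_one hM).mpr (mod_cast hcard))
  calc esDensity A = ∑ x ∈ A, C⁻¹ * (Nat.multinomial univ (fiberCard x) : ℝ)⁻¹ := rfl
    _ = ∑ c ∈ A.image fiberCard,
          #{x ∈ A | fiberCard x = c} • (C⁻¹ * (Nat.multinomial univ c : ℝ)⁻¹) :=
      sum_comp (fun c => C⁻¹ * (Nat.multinomial univ c : ℝ)⁻¹) fiberCard
    _ ≤ ∑ c ∈ A.image fiberCard, C⁻¹ := sum_le_sum hslice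
    _ = #(A.image fiberCard) / C := by rw [sum_const, nsmul_eq_mul, div_eq_mul_inv]

namespace Nat

lemma multichoose_le_multichoose_right {j r n : ℕ} (hr : 0 < r) (h : r ≤ n) :
    j.multichoose r ≤ j.multichoose n := by
  obtain ⟨r, rfl⟩ := Nat.exists_eq_add_of_le' hr
  cases j with
  | zero => simp [multichoose_zero_succ]
  | succ j =>
    refine monotone_nat_of_le_succ (fun t => ?_) h
    rw [multichoose_succ_succ]
    exact Nat.le_add_left _ _

lemma multichoose_mul_add (j n : ℕ) : j.multichoose n * (j + n) = j * (j + 1).multichoose n := by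
  rcases Nat.eq_zero_or_pos (j + n) with h | h
  · simp_all
  · have := Nat.choose_mul_succ_eq (j + n - 1) n
    rw [Nat.sub_add_cancel h, Nat.add_sub_cancel] at this
    rw [multichoose_eq, multichoose_eq, this, mul_comm, show j + 1 + n - 1 = j + n by omega]

end Nat

section Compositions

open Function

variable {ι : Type*} [DecidableEq ι]

lemma Finset.card_piAntidiag_nat (s : Finset ι) (n : ℕ) :
    #(piAntidiag s n) = (#s).multichoose n := by
  simpa [finsuppAntidiag] using card_finsuppAntidiag_nat_eq_multichoose (s := s) n

lemma Finset.card_filter_piAntidiag_apply_eq {s : Finset ι} {i : ι} (hi : i ∈ s) {a n : ℕ}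
    (ha : a ≤ n) : #{c ∈ piAntidiag s n | c i = a} = (#s - 1).multichoose (n - a) := by
  rw [← card_erase_of_mem hi, ← card_piAntidiag_nat]
  refine card_bij' (fun c _ => update c i 0) (fun d _ => update d i a) ?_ ?_ ?_ ?_
  · intro c hc
    simp only [mem_filter, mem_piAntidiag] at hc ⊢
    obtain ⟨⟨hsum, hsupp⟩, rfl⟩ := hc
    refine ⟨?_, fun j hj => ?_⟩
    · rw [sum_update_of_notMem (notMem_erase i s), ← hsum, ← add_sum_erase s c hi]
      omega
    · have hji : j ≠ i := by rintro rfl; simp at hj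
      exact mem_erase.mpr ⟨hji, hsupp j (by simpa [hji] using hj)⟩
  · intro d hd
    simp only [mem_filter, mem_piAntidiag] at hd ⊢
    obtain ⟨hsum, hsupp⟩ := hd
    refine ⟨⟨?_, fun j hj => ?_⟩, by simp⟩
    · rw [sum_update_of_mem hi, sdiff_singleton_eq_erase, hsum]
      omega
    · by_cases hji : j = i
      · exact hji ▸ hi
      · exact mem_of_mem_erase (hsupp j (by simpa [hji] using hj))
  · intro c hc
    simp_all
  · intro d hd
    have hdi : d i = 0 := by
      by_contra h
      exact notMem_erase i s ((mem_piAntidiag.mp hd).2 i h)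
    simp [← hdi]

variable [Fintype ι]

lemma Finset.card_filter_piAntidiag_apply_eq_mul_le (i : ι) {a n : ℕ} (ha : a < n) :
    #{c ∈ piAntidiag univ n | c i = a} * n ≤
      Fintype.card ι * (Fintype.card ι).multichoose n := by
  obtain ⟨j, hj⟩ : ∃ j, Fintype.card ι = j + 1 :=
    Nat.exists_eq_add_one.mpr (Fintype.card_pos_iff.mpr ⟨i⟩)
  rw [card_filter_piAntidiag_apply_eq (mem_univ i) ha.le, card_univ, hj, Nat.add_sub_cancel]
  calc j.multichoose (n - a) * n ≤ j.multichoose n * (j + n) :=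
        Nat.mul_le_mul (Nat.multichoose_le_multichoose_right (by omega) (Nat.sub_le n a)) (by omega)
    _ = j * (j + 1).multichoose n := Nat.multichoose_mul_add j n
    _ ≤ (j + 1) * (j + 1).multichoose n := Nat.mul_le_mul_right _ (Nat.le_succ j)

lemma Finset.card_filter_piAntidiag_apply_lt_mul_le (i : ι) (n m : ℕ) :
    #{c ∈ piAntidiag univ n | c i < m} * n ≤
      m * Fintype.card ι * (Fintype.card ι).multichoose n := by
  rcases le_or_gt m n with hmn | hnm
  · rw [card_eq_sum_card_fiberwise (f := fun c => c i) (t := range m) fun c hc => by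
      simpa using (mem_filter.mp hc).2, sum_mul, mul_assoc]
    simpa using sum_le_card_nsmul _ _ _ fun a ha =>
      (Nat.mul_le_mul_right n (card_le_card (filter_subset_filter _ (filter_subset _ _)))).trans
        (card_filter_piAntidiag_apply_eq_mul_le i ((mem_range.mp ha).trans_le hmn))
  · calc #{c ∈ piAntidiag univ n | c i < m} * n ≤ (Fintype.card ι).multichoose n * m := by
          refine Nat.mul_le_mul ?_ hnm.le
          rw [← card_univ, ← card_piAntidiag_nat]
          exact card_filter_le _ _
      _ ≤ m * Fintype.card ι * (Fintype.card ι).multichoose n := by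
          rw [mul_comm, mul_right_comm]
          exact Nat.le_mul_of_pos_right _ (Fintype.card_pos_iff.mpr ⟨i⟩)

end Compositions

theorem equal_slices_few_top_coordinates_general (k n m : ℕ) (hk : 0 < k) (hn : 0 < n) :
    esDensity ((Finset.univ : Finset (Fin n → Fin k)).filter
        fun x => (Finset.univ.filter fun i => (x i : ℕ) = k - 1).card < m) ≤
      (m : ℝ) * k / n := by
  set top : Fin k := ⟨k - 1, by omega⟩
  have himage : (univ.filter fun x : Fin n → Fin k =>
        (univ.filter fun i => (x i : ℕ) = k - 1).card < m).image fiberCard ⊆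
      {c ∈ piAntidiag (univ : Finset (Fin k)) n | c top < m} := by
    intro c hc
    obtain ⟨x, hx, rfl⟩ := mem_image.mp hc
    refine mem_filter.mpr ⟨mem_piAntidiag.mpr ⟨by simp [sum_fiberCard], by simp⟩, ?_⟩
    simpa [fiberCard, top, Fin.ext_iff] using hx
  have hC : (n + k - 1).choose (k - 1) = k.multichoose n := by
    rw [Nat.multichoose_eq, add_comm k n]
    exact Nat.choose_symm_of_eq_add (by omega)
  have hCpos : (0 : ℝ) < (n + k - 1).choose (k - 1) := mod_cast Nat.choose_pos (by omega)
  have hcount := card_filter_piAntidiag_apply_lt_mul_le top n m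
  rw [Fintype.card_fin, ← hC] at hcount
  calc _ ≤ _ := esDensity_le_card_image_fiberCard _
    _ ≤ (#{c ∈ piAntidiag (univ : Finset (Fin k)) n | c top < m} : ℝ) /
          (n + k - 1).choose (k - 1) := by gcongr
    _ ≤ m * k / n := by
      rw [div_le_div_iff₀ hCpos (mod_cast hn)]
      exact_mod_cast hcount

/-- For an equal-slices random point of `[k]^n`, the probability that fewer than
`m` coordinates equal `k` (the top value) is at most `mk/n`. -/
theorem equal_slices_few_top_coordinates (k n m : ℕ) (hk : 0 < k) (hn : 0 < n)
    (hm : 0 < m) :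
    esDensity ((Finset.univ : Finset (Fin n → Fin k)).filter
        fun x => (Finset.univ.filter fun i => (x i : ℕ) = k - 1).card < m) ≤
      (m : ℝ) * k / n :=
  equal_slices_few_top_coordinates_general k n m hk hn
end

section
/- Let δ, β > 0, let m, n, k be positive integers with m ≤ min{βn/(8k), βn/(2k²)}, and let A ⊆ [k]^n have equal-slices density δ. Choose uniformly at random a subset J ⊆ [n] of size m, then independently choose x uniformly from [k]^J and choose y ∈ [k]^{[n]∖J} according to the equal-slices measure on [k]^{[n]∖J}. Then the probability that the combined string (x, y) lies in A is between δ − β and δ + β. -/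
open Finset

/-!
Write `ν` for the equal-slices measure on `[k]^n` and `w` for the law of the combined string
`(x, y)`. Both are probability measures, and `w ≤ (1 + β) ν` pointwise; for two probability
measures this gives `|w(A) - ν(A)| ≤ β`.
In terms of `countFactorialProd z = ∏_j (#{i | z i = j})!` one has
`ν(z) = countFactorialProd z / (C(n+k-1, k-1) n!)`. Averaging over the splittings, deleting
one coordinate of colour `j` divides `countFactorialProd` by the number of such coordinates,
so each deleted coordinate costs at most a factor `k`, which cancels the uniform weight
`k⁻¹` of that coordinate. What remains is the ratio
`C(n+k-1, k-1) / C(n-m+k-1, k-1) = ∏_{n-m < s ≤ n} (1 + (k-1)/s) ≤ 1 + β`,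
using `8mk ≤ βn`.
-/

section ColorCount

variable {k : ℕ} {S : Type*} [Fintype S]

def colorCount (z : S → Fin k) (j : Fin k) : ℕ := #{i | z i = j}

def countFactorialProd (z : S → Fin k) : ℕ := ∏ j, (colorCount z j).factorial

lemma sum_colorCount (z : S → Fin k) : ∑ j, colorCount z j = Fintype.card S := by
  simp only [colorCount, card_filter]
  rw [sum_comm]
  simp

lemma countFactorialProd_pos (z : S → Fin k) : 0 < countFactorialProd z :=
  prod_pos fun _ _ => Nat.factorial_pos _

lemma colorCount_comp_equiv {V : Type*} [Fintype V] (g : V ≃ S) (z : S → Fin k) :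
    colorCount (z ∘ g) = colorCount z := by
  ext j
  simp only [colorCount, ← Fintype.card_subtype]
  exact Fintype.card_congr (g.subtypeEquiv fun _ => Iff.rfl)

lemma countFactorialProd_comp_equiv {V : Type*} [Fintype V] (g : V ≃ S) (z : S → Fin k) :
    countFactorialProd (z ∘ g) = countFactorialProd z := by
  simp only [countFactorialProd, colorCount_comp_equiv]

lemma prod_factorial_add_ite {ι : Type*} [Fintype ι] [DecidableEq ι] (c : ι → ℕ) (x : ι) :
    ∏ j, (c j + if x = j then 1 else 0).factorial = (c x + 1) * ∏ j, (c j).factorial := by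
  rw [← mul_prod_erase univ _ (mem_univ x), ← mul_prod_erase univ (fun j => (c j).factorial)
    (mem_univ x), if_pos rfl, Nat.factorial_succ, mul_assoc]
  congr 2
  exact prod_congr rfl fun j hj => by rw [if_neg (ne_of_mem_erase hj).symm, add_zero]

lemma colorCount_cons {N : ℕ} (x : Fin k) (y : Fin N → Fin k) (j : Fin k) :
    colorCount (Fin.cons x y : Fin (N + 1) → Fin k) j =
      colorCount y j + if x = j then 1 else 0 := by
  simp only [colorCount, card_filter, Fin.sum_univ_succ, Fin.cons_zero, Fin.cons_succ]
  omega

lemma countFactorialProd_cons {N : ℕ} (x : Fin k) (y : Fin N → Fin k) :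
    countFactorialProd (Fin.cons x y : Fin (N + 1) → Fin k) =
      (colorCount y x + 1) * countFactorialProd y := by
  simp only [countFactorialProd, colorCount_cons, prod_factorial_add_ite]

/-- Appending a letter multiplies the sum by `∑_x (colorCount y x + 1) = N + k`. -/
lemma sum_countFactorialProd_mul_factorial (hk : 0 < k) (N : ℕ) :
    (∑ y : Fin N → Fin k, countFactorialProd y) * (k - 1).factorial =
      (N + k - 1).factorial := by
  induction N with
  | zero => simp [countFactorialProd, colorCount]
  | succ N ih =>
    have hsum_cons : ∑ y : Fin (N + 1) → Fin k, countFactorialProd y =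
        (N + k) * ∑ y : Fin N → Fin k, countFactorialProd y := by
      rw [← (Fin.consEquiv fun _ => Fin k).sum_comp, Fintype.sum_prod_type, sum_comm, mul_sum]
      refine sum_congr rfl fun y _ => ?_
      change ∑ x, countFactorialProd (Fin.cons x y : Fin (N + 1) → Fin k) = _
      simp only [countFactorialProd_cons, ← sum_mul, sum_add_distrib,
        sum_colorCount, Fintype.card_fin, sum_const, card_univ, smul_eq_mul, mul_one]
    rw [hsum_cons, mul_assoc, ih, show N + 1 + k - 1 = N + k - 1 + 1 by omega,
      Nat.factorial_succ, show N + k - 1 + 1 = N + k by omega]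

end ColorCount

lemma slicePr_eq (k n : ℕ) (x : Fin n → Fin k) :
    slicePr k n x =
      ((n + k - 1).choose (k - 1) : ℝ)⁻¹ * (countFactorialProd x / n.factorial) := by
  have hspec := Nat.multinomial_spec univ (colorCount x)
  rw [sum_colorCount, Fintype.card_fin] at hspec
  have hmul : (countFactorialProd x : ℝ) * Nat.multinomial univ (colorCount x) = n.factorial := by
    exact_mod_cast hspec
  rw [slicePr, ← hmul,
    div_mul_cancel_left₀ (Nat.cast_ne_zero.mpr (countFactorialProd_pos x).ne')]
  rfl

lemma slicePr_nonneg (k n : ℕ) (x : Fin n → Fin k) : 0 ≤ slicePr k n x := by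
  rw [slicePr]
  positivity

lemma sum_slicePr {k : ℕ} (hk : 0 < k) (n : ℕ) :
    ∑ x : Fin n → Fin k, slicePr k n x = 1 := by
  have hchoose : ((n + k - 1).choose (k - 1) * n.factorial : ℝ) * (k - 1).factorial =
      (n + k - 1).factorial := by
    have := Nat.choose_mul_factorial_mul_factorial (show k - 1 ≤ n + k - 1 by omega)
    rw [show n + k - 1 - (k - 1) = n by omega] at this
    rw [mul_right_comm]
    exact_mod_cast this
  have hsum : (∑ x : Fin n → Fin k, (countFactorialProd x : ℝ)) =
      (n + k - 1).choose (k - 1) * n.factorial := by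
    refine mul_right_cancel₀ (Nat.cast_ne_zero.mpr (k - 1).factorial_ne_zero) ?_
    rw [hchoose]
    exact_mod_cast sum_countFactorialProd_mul_factorial hk n
  have hC : ((n + k - 1).choose (k - 1) : ℝ) ≠ 0 :=
    Nat.cast_ne_zero.mpr (Nat.choose_pos (by omega)).ne'
  simp only [slicePr_eq, ← mul_sum, ← sum_div, hsum]
  field_simp [n.factorial_ne_zero]

section Restriction

variable {k : ℕ} {S : Type*} [Fintype S] [DecidableEq S]

lemma colorCount_restrict_add (z : S → Fin k) (s : S) (j : Fin k) :
    colorCount (fun y : {y // y ≠ s} => z y.1) j + (if z s = j then 1 else 0) =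
      colorCount z j := by
  simp only [colorCount, card_filter]
  rw [← sum_erase_add univ _ (mem_univ s), ← sum_subtype (univ.erase s) (by simp)
    (fun i => if z i = j then 1 else 0)]

lemma colorCount_mul_countFactorialProd_restrict (z : S → Fin k) (s : S) :
    colorCount z (z s) * countFactorialProd (fun y : {y // y ≠ s} => z y.1) =
      countFactorialProd z := by
  rw [← colorCount_restrict_add z s, if_pos rfl]
  simp only [countFactorialProd, ← colorCount_restrict_add z s, prod_factorial_add_ite]

/-- Removing a coordinate of colour `j` divides `countFactorialProd` by `colorCount z j`, and the
`colorCount z j` such coordinates then contribute `countFactorialProd z` in total. -/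
lemma sum_countFactorialProd_restrict_le (z : S → Fin k) :
    ∑ s, countFactorialProd (fun y : {y // y ≠ s} => z y.1) ≤ k * countFactorialProd z := by
  rw [← sum_fiberwise univ z]
  calc ∑ j, ∑ s with z s = j, countFactorialProd (fun y : {y // y ≠ s} => z y.1)
      ≤ ∑ _j : Fin k, countFactorialProd z := sum_le_sum fun j _ => ?_
    _ = k * countFactorialProd z := by simp
  rcases (colorCount z j).eq_zero_or_pos with hj | hj
  · rw [colorCount, card_eq_zero] at hj
    simp [hj]
  refine le_of_eq (Nat.eq_of_mul_eq_mul_right hj ?_)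
  rw [sum_mul, sum_congr rfl fun s hs => ?_, sum_const, smul_eq_mul, mul_comm]
  · rfl
  rw [← (mem_filter.mp hs).2, mul_comm]
  exact colorCount_mul_countFactorialProd_restrict z s

end Restriction

def optionSumEquiv (α β : Type*) : Option (α ⊕ β) ≃ Option α ⊕ β where
  toFun o := o.elim (Sum.inl none) (Sum.map some id)
  invFun := Sum.elim (Option.map Sum.inl) (some ∘ Sum.inr)
  left_inv := by rintro (_ | a | b) <;> rfl
  right_inv := by rintro ((_ | a) | b) <;> rfl

/-- Peeling off the coordinate `e (inl 0) = s` reduces to bijections onto `{y // y ≠ s}`,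
to which `sum_countFactorialProd_restrict_le` applies. -/
lemma sum_equiv_countFactorialProd_le {k : ℕ} (T : Type*) [Fintype T] [DecidableEq T] (m : ℕ)
    {S : Type*} [Fintype S] [DecidableEq S] (z : S → Fin k) :
    ∑ e : Fin m ⊕ T ≃ S, countFactorialProd (fun t => z (e (Sum.inr t))) ≤
      k ^ m * (Fintype.card T).factorial * countFactorialProd z := by
  induction m generalizing S with
  | zero =>
    have hterm (e : Fin 0 ⊕ T ≃ S) : countFactorialProd (fun t => z (e (Sum.inr t))) =
        countFactorialProd z :=
      countFactorialProd_comp_equiv ((Equiv.emptySum (Fin 0) T).symm.trans e) z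
    have hcard : Fintype.card (Fin 0 ⊕ T ≃ S) ≤ (Fintype.card T).factorial := by
      cases isEmpty_or_nonempty (Fin 0 ⊕ T ≃ S) with
      | inl _ => simp
      | inr h => simp [Fintype.card_equiv h.some]
    simpa [sum_congr rfl fun e _ => hterm e] using Nat.mul_le_mul_right _ hcard
  | succ m ih =>
    let q : Option (Fin m ⊕ T) ≃ Fin (m + 1) ⊕ T :=
      (optionSumEquiv _ _).trans (Equiv.sumCongr (finSuccEquiv m).symm (Equiv.refl T))
    calc ∑ e : Fin (m + 1) ⊕ T ≃ S, countFactorialProd (fun t => z (e (Sum.inr t)))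
        = ∑ s, ∑ f : {f : Option (Fin m ⊕ T) ≃ S // f none = s},
            countFactorialProd (fun t => z (f.1 (some (Sum.inr t)))) := by
          refine (Fintype.sum_equiv (q.equivCongr (Equiv.refl S)) _ _ fun _ => rfl).symm.trans ?_
          exact (Fintype.sum_fiberwise (fun f : Option (Fin m ⊕ T) ≃ S => f none) _).symm
      _ = ∑ s, ∑ e : Fin m ⊕ T ≃ {y // y ≠ s},
            countFactorialProd (fun t => (fun y : {y // y ≠ s} => z y.1) (e (Sum.inr t))) :=
          sum_congr rfl fun s _ => Fintype.sum_equiv (Equiv.optionSubtype s) _ _ fun _ => rfl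
      _ ≤ ∑ s, k ^ m * (Fintype.card T).factorial *
            countFactorialProd (fun y : {y // y ≠ s} => z y.1) :=
          sum_le_sum fun s _ => ih (fun y : {y // y ≠ s} => z y.1)
      _ ≤ k ^ m * (Fintype.card T).factorial * (k * countFactorialProd z) := by
          rw [← mul_sum]
          exact Nat.mul_le_mul_left _ (sum_countFactorialProd_restrict_le z)
      _ = k ^ (m + 1) * (Fintype.card T).factorial * countFactorialProd z := by ring

section Binomial

lemma choose_succ_mul_succ {k : ℕ} (hk : 0 < k) (t : ℕ) :
    (t + 1 + k - 1).choose (k - 1) * (t + 1) = (t + k - 1).choose (k - 1) * (t + k) := by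
  have h := Nat.choose_mul_succ_eq (t + k - 1) (k - 1)
  rw [show t + k - 1 + 1 = t + k by omega, show t + k - (k - 1) = t + 1 by omega] at h
  rw [show t + 1 + k - 1 = t + k by omega, h]

lemma choose_add_le_pow_mul {k : ℕ} (hk : 0 < k) (t j : ℕ) :
    ((t + j + k - 1).choose (k - 1) : ℝ) ≤
      (1 + (k - 1) / (t + 1)) ^ j * (t + k - 1).choose (k - 1) := by
  have hk1 : (0 : ℝ) ≤ k - 1 := by
    rw [sub_nonneg]
    exact_mod_cast hk
  induction j with
  | zero => simp
  | succ j ih =>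
    have hmul : ((t + j + 1 + k - 1).choose (k - 1) : ℝ) * (t + j + 1) =
        (t + j + k - 1).choose (k - 1) * (t + j + k) := by
      exact_mod_cast choose_succ_mul_succ hk (t + j)
    calc ((t + (j + 1) + k - 1).choose (k - 1) : ℝ)
        = (t + j + k - 1).choose (k - 1) * (1 + (k - 1) / (t + j + 1)) := by
          rw [← add_assoc]
          field_simp
          linarith
      _ ≤ (t + j + k - 1).choose (k - 1) * (1 + (k - 1) / (t + 1)) := by
          gcongr
          simp
      _ ≤ (1 + (k - 1) / (t + 1)) ^ j * (t + k - 1).choose (k - 1) *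
            (1 + (k - 1) / (t + 1)) := by
          gcongr
      _ = (1 + (k - 1) / (t + 1)) ^ (j + 1) * (t + k - 1).choose (k - 1) := by ring

lemma one_add_pow_le_one_add_two_mul {a : ℝ} (ha : 0 ≤ a) {m : ℕ} (hma : m * a ≤ 1 / 2) :
    (1 + a) ^ m ≤ 1 + 2 * m * a := by
  calc (1 + a) ^ m ≤ Real.exp a ^ m := by
        gcongr
        linarith [Real.add_one_le_exp a]
    _ = Real.exp (m * a) := (Real.exp_nat_mul a m).symm
    _ ≤ 1 / (1 - m * a) := Real.exp_bound_div_one_sub_of_interval (by positivity) (by linarith)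
    _ ≤ 1 + 2 * m * a := by
        rw [div_le_iff₀ (by linarith)]
        have hma' : (0 : ℝ) ≤ m * a * (1 - 2 * (m * a)) := by
          have : (0 : ℝ) ≤ m * a := by positivity
          nlinarith
        nlinarith

lemma choose_le_one_add_mul_choose {k : ℕ} (hk : 0 < k) {β : ℝ} (hβ1 : β ≤ 1) {m t : ℕ}
    (hmt : 2 * m * (k - 1) ≤ β * (t + 1)) :
    ((t + m + k - 1).choose (k - 1) : ℝ) ≤ (1 + β) * (t + k - 1).choose (k - 1) := by
  have ha : (0 : ℝ) ≤ (k - 1) / (t + 1) :=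
    div_nonneg (sub_nonneg.mpr (by exact_mod_cast hk)) (by positivity)
  have hma : 2 * m * ((k - 1) / (t + 1)) ≤ β := by
    rw [← mul_div_assoc, div_le_iff₀ (by positivity)]
    exact hmt
  calc ((t + m + k - 1).choose (k - 1) : ℝ)
      ≤ (1 + (k - 1) / (t + 1)) ^ m * (t + k - 1).choose (k - 1) := choose_add_le_pow_mul hk t m
    _ ≤ (1 + 2 * m * ((k - 1) / (t + 1))) * (t + k - 1).choose (k - 1) := by
        gcongr
        exact one_add_pow_le_one_add_two_mul ha (by linarith)
    _ ≤ (1 + β) * (t + k - 1).choose (k - 1) := by gcongr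

end Binomial

lemma sum_sum_sumElim_comp_symm {M T S α β : Type*} [Fintype M] [DecidableEq M] [Fintype T]
    [DecidableEq T] [Fintype S] [DecidableEq S] [Fintype α] [AddCommMonoid β] (e : M ⊕ T ≃ S)
    (F : (S → α) → (T → α) → β) :
    ∑ x : M → α, ∑ y : T → α, F (fun i => Sum.elim x y (e.symm i)) y =
      ∑ z : S → α, F z (fun t => z (e (Sum.inr t))) := by
  rw [← Fintype.sum_prod_type']
  exact Fintype.sum_equiv ((Equiv.sumArrowEquivProdArrow M T α).symm.trans
    (e.arrowCongr (Equiv.refl α))) _ _ fun ⟨x, y⟩ => congrArg _ (funext fun t => by simp)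

lemma sum_equiv_slicePr_le {k m t n : ℕ} (z : Fin n → Fin k) :
    ∑ e : Fin m ⊕ Fin t ≃ Fin n, slicePr k t (fun i => z (e (Sum.inr i))) ≤
      k ^ m * (((t + k - 1).choose (k - 1) : ℝ)⁻¹ * countFactorialProd z) := by
  have hbound : (∑ e : Fin m ⊕ Fin t ≃ Fin n,
      (countFactorialProd (fun i => z (e (Sum.inr i))) : ℝ)) ≤
      k ^ m * t.factorial * countFactorialProd z := by
    exact_mod_cast (Fintype.card_fin t ▸ sum_equiv_countFactorialProd_le (Fin t) m z)
  simp only [slicePr_eq, ← mul_sum, ← sum_div]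
  calc _ ≤ ((t + k - 1).choose (k - 1) : ℝ)⁻¹ *
          (k ^ m * t.factorial * countFactorialProd z / t.factorial) := by gcongr
    _ = _ := by field_simp

/-- The probability of `z` when `[n]` is split by a uniform bijection `Fin m ⊕ Fin t ≃ Fin n`,
the `Fin m` part is filled uniformly and the `Fin t` part by equal slices. -/
noncomputable def splitSlicePr (k m t n : ℕ) (z : Fin n → Fin k) : ℝ :=
  (Fintype.card (Fin m ⊕ Fin t ≃ Fin n) : ℝ)⁻¹ *
    ∑ e : Fin m ⊕ Fin t ≃ Fin n,
      ((k : ℝ) ^ m)⁻¹ * slicePr k t (fun i => z (e (Sum.inr i)))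

lemma splitSlicePr_nonneg (k m t n : ℕ) (z : Fin n → Fin k) : 0 ≤ splitSlicePr k m t n z :=
  mul_nonneg (by positivity) (sum_nonneg fun _ _ => mul_nonneg (by positivity) (slicePr_nonneg ..))

lemma card_equiv_of_add_eq {m t n : ℕ} (hmtn : m + t = n) :
    Fintype.card (Fin m ⊕ Fin t ≃ Fin n) = n.factorial := by
  rw [Fintype.card_equiv (finSumFinEquiv.trans (finCongr hmtn))]
  simp [hmtn]

lemma sum_splitSlicePr {k : ℕ} (hk : 0 < k) {m t n : ℕ} (hmtn : m + t = n) :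
    ∑ z, splitSlicePr k m t n z = 1 := by
  have hmass (e : Fin m ⊕ Fin t ≃ Fin n) :
      ∑ z : Fin n → Fin k, slicePr k t (fun i => z (e (Sum.inr i))) = k ^ m := by
    rw [← sum_sum_sumElim_comp_symm e fun _ y => slicePr k t y]
    simp [sum_slicePr hk]
  have hk' : (k : ℝ) ^ m ≠ 0 := pow_ne_zero _ (Nat.cast_ne_zero.mpr hk.ne')
  simp only [splitSlicePr, ← mul_sum, sum_comm (γ := Fin n → Fin k), hmass, sum_const,
    card_univ, card_equiv_of_add_eq hmtn, nsmul_eq_mul]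
  field_simp [n.factorial_ne_zero]

lemma splitSlicePr_le {k : ℕ} (hk : 0 < k) {m t n : ℕ} (hmtn : m + t = n) {β : ℝ}
    (hchoose : ((n + k - 1).choose (k - 1) : ℝ) ≤ (1 + β) * (t + k - 1).choose (k - 1))
    (z : Fin n → Fin k) : splitSlicePr k m t n z ≤ (1 + β) * slicePr k n z := by
  have hCt : (0 : ℝ) < (t + k - 1).choose (k - 1) := by exact_mod_cast Nat.choose_pos (by omega)
  have hCn : (0 : ℝ) < (n + k - 1).choose (k - 1) := by exact_mod_cast Nat.choose_pos (by omega)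
  have hinv : ((t + k - 1).choose (k - 1) : ℝ)⁻¹ ≤
      (1 + β) * ((n + k - 1).choose (k - 1) : ℝ)⁻¹ := by
    rw [← div_eq_mul_inv, inv_eq_one_div, div_le_div_iff₀ hCt hCn]
    linarith
  calc splitSlicePr k m t n z
      = (n.factorial : ℝ)⁻¹ * ((k : ℝ) ^ m)⁻¹ *
          ∑ e : Fin m ⊕ Fin t ≃ Fin n, slicePr k t (fun i => z (e (Sum.inr i))) := by
        rw [splitSlicePr, card_equiv_of_add_eq hmtn, ← mul_sum, mul_assoc]
    _ ≤ (n.factorial : ℝ)⁻¹ * ((k : ℝ) ^ m)⁻¹ *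
          (k ^ m * (((t + k - 1).choose (k - 1) : ℝ)⁻¹ * countFactorialProd z)) := by
        gcongr
        exact sum_equiv_slicePr_le z
    _ = ((t + k - 1).choose (k - 1) : ℝ)⁻¹ * (countFactorialProd z / n.factorial) := by
        field_simp
    _ ≤ (1 + β) * ((n + k - 1).choose (k - 1) : ℝ)⁻¹ *
          (countFactorialProd z / n.factorial) := by gcongr
    _ = (1 + β) * slicePr k n z := by rw [slicePr_eq, mul_assoc]

lemma sum_mem_splitSlicePr (k m t n : ℕ) (A : Finset (Fin n → Fin k)) :
    (Fintype.card (Fin m ⊕ Fin t ≃ Fin n) : ℝ)⁻¹ * ∑ e : Fin m ⊕ Fin t ≃ Fin n,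
      ((k : ℝ) ^ m)⁻¹ * ∑ x : Fin m → Fin k, ∑ y : Fin t → Fin k,
        slicePr k t y * (if (fun i => Sum.elim x y (e.symm i)) ∈ A then (1 : ℝ) else 0) =
      ∑ z ∈ A, splitSlicePr k m t n z := by
  have hrestrict (e : Fin m ⊕ Fin t ≃ Fin n) :
      ∑ x : Fin m → Fin k, ∑ y : Fin t → Fin k,
        slicePr k t y * (if (fun i => Sum.elim x y (e.symm i)) ∈ A then (1 : ℝ) else 0) =
      ∑ z ∈ A, slicePr k t (fun i => z (e (Sum.inr i))) := by
    rw [sum_sum_sumElim_comp_symm e fun z y => slicePr k t y * if z ∈ A then (1 : ℝ) else 0]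
    simp
  simp only [hrestrict, splitSlicePr, ← mul_sum]
  rw [sum_comm]

section Comparison

variable {X : Type*} [Fintype X] {w ν : X → ℝ}

lemma sum_mem_Icc_zero_one (hw : ∀ x, 0 ≤ w x) (hw1 : ∑ x, w x = 1) (A : Finset X) :
    ∑ x ∈ A, w x ∈ Set.Icc 0 1 :=
  ⟨sum_nonneg fun x _ => hw x,
    hw1 ▸ sum_le_sum_of_subset_of_nonneg (subset_univ A) fun x _ _ => hw x⟩

/-- The lower bound goes through the complement: `∑_{Aᶜ} w ≤ (1 + β) ∑_{Aᶜ} ν`. -/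
lemma sum_mem_Icc_of_le_one_add_mul [DecidableEq X] {β : ℝ} (hβ : 0 ≤ β)
    (hν : ∀ x, 0 ≤ ν x) (hw1 : ∑ x, w x = 1) (hν1 : ∑ x, ν x = 1)
    (hwν : ∀ x, w x ≤ (1 + β) * ν x) (A : Finset X) :
    ∑ x ∈ A, w x ∈ Set.Icc (∑ x ∈ A, ν x - β) (∑ x ∈ A, ν x + β) := by
  have hle (B : Finset X) : ∑ x ∈ B, w x ≤ (1 + β) * ∑ x ∈ B, ν x := by
    rw [mul_sum]
    exact sum_le_sum fun x _ => hwν x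
  have hA := (sum_mem_Icc_zero_one hν hν1 A).2
  have hAc := (sum_mem_Icc_zero_one hν hν1 Aᶜ).2
  have hw_compl := sum_add_sum_compl A w
  have hν_compl := sum_add_sum_compl A ν
  constructor <;> nlinarith [hle A, hle Aᶜ]

end Comparison

theorem equal_slices_to_uniform_restriction_general (k m n : ℕ) (hk : 0 < k)
    (hmn : m ≤ n) (δ β : ℝ) (hβ : 0 < β)
    (h1 : (m : ℝ) ≤ β * n / (8 * k))
    (A : Finset (Fin n → Fin k)) (hA : esDensity A = δ) :
    δ - β ≤ ((Fintype.card ((Fin m ⊕ Fin (n - m)) ≃ Fin n) : ℝ))⁻¹ *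
        ∑ e : (Fin m ⊕ Fin (n - m)) ≃ Fin n,
          ((k : ℝ) ^ m)⁻¹ *
            ∑ x : Fin m → Fin k, ∑ y : Fin (n - m) → Fin k,
              slicePr k (n - m) y *
                (if (fun i => Sum.elim x y (e.symm i)) ∈ A then (1 : ℝ) else 0) ∧
    ((Fintype.card ((Fin m ⊕ Fin (n - m)) ≃ Fin n) : ℝ))⁻¹ *
        ∑ e : (Fin m ⊕ Fin (n - m)) ≃ Fin n,
          ((k : ℝ) ^ m)⁻¹ *
            ∑ x : Fin m → Fin k, ∑ y : Fin (n - m) → Fin k,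
              slicePr k (n - m) y *
                (if (fun i => Sum.elim x y (e.symm i)) ∈ A then (1 : ℝ) else 0) ≤
      δ + β := by
  have hmtn : m + (n - m) = n := Nat.add_sub_cancel' hmn
  rw [sum_mem_splitSlicePr, ← hA, esDensity]
  rcases le_or_gt β 1 with hβ1 | hβ1
  · have hmt : 2 * m * ((k : ℝ) - 1) ≤ β * ((n - m : ℕ) + 1) := by
      rw [le_div_iff₀ (by positivity)] at h1
      rw [Nat.cast_sub hmn]
      nlinarith
    have hchoose := choose_le_one_add_mul_choose hk hβ1 hmt
    rw [Nat.sub_add_cancel hmn] at hchoose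
    exact sum_mem_Icc_of_le_one_add_mul hβ.le (slicePr_nonneg k n) (sum_splitSlicePr hk hmtn)
      (sum_slicePr hk n) (splitSlicePr_le hk hmtn hchoose) A
  · have hP :=
      sum_mem_Icc_zero_one (splitSlicePr_nonneg k m (n - m) n) (sum_splitSlicePr hk hmtn) A
    have hδ := sum_mem_Icc_zero_one (slicePr_nonneg k n) (sum_slicePr hk n) A
    constructor <;> linarith [hP.1, hP.2, hδ.1, hδ.2]

/-- Let `A ⊆ [k]^n` have equal-slices density `δ`, and let
`m ≤ min {βn/(8k), βn/(2k²)}`.  Choose a uniformly random partition of the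
coordinates into an `m`-set `J` and its complement (encoded by a uniformly random
bijection `e : Fin m ⊕ Fin (n−m) ≃ Fin n`), then independently choose `x` uniform
on `[k]^J` and `y` equal-slices on `[k]^{[n]∖J}`.  Then the probability that the
combined string `(x, y)` lies in `A` is between `δ − β` and `δ + β`.
(Both the uniform and the equal-slices measures are invariant under coordinate
permutations, so this encoding agrees with choosing a uniformly random subset `J`
of size `m`.) -/
theorem equal_slices_to_uniform_restriction (k m n : ℕ) (hk : 0 < k) (hm : 0 < m)
    (hmn : m ≤ n) (δ β : ℝ) (hβ : 0 < β)
    (h1 : (m : ℝ) ≤ β * n / (8 * k)) (h2 : (m : ℝ) ≤ β * n / (2 * (k : ℝ) ^ 2))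
    (A : Finset (Fin n → Fin k)) (hA : esDensity A = δ) :
    δ - β ≤ ((Fintype.card ((Fin m ⊕ Fin (n - m)) ≃ Fin n) : ℝ))⁻¹ *
        ∑ e : (Fin m ⊕ Fin (n - m)) ≃ Fin n,
          ((k : ℝ) ^ m)⁻¹ *
            ∑ x : Fin m → Fin k, ∑ y : Fin (n - m) → Fin k,
              slicePr k (n - m) y *
                (if (fun i => Sum.elim x y (e.symm i)) ∈ A then (1 : ℝ) else 0) ∧
    ((Fintype.card ((Fin m ⊕ Fin (n - m)) ≃ Fin n) : ℝ))⁻¹ *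
        ∑ e : (Fin m ⊕ Fin (n - m)) ≃ Fin n,
          ((k : ℝ) ^ m)⁻¹ *
            ∑ x : Fin m → Fin k, ∑ y : Fin (n - m) → Fin k,
              slicePr k (n - m) y *
                (if (fun i => Sum.elim x y (e.symm i)) ∈ A then (1 : ℝ) else 0) ≤
      δ + β :=
  equal_slices_to_uniform_restriction_general k m n hk hmn δ β hβ h1 A hA
end
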